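/- arXiv:1204.5787 — 2 statements merged into one kernel-verified Lean document; each statement's English description precedes it below -/
import Mathlib

section
/- Let R be a commutative ring and M an R-module. If the functor (− ⊗_R M) : Mod_R → Mod_R preserves all small limits (equivalently, all small products), then M is a finitely generated projective R-module. -/
/-!
Preservation of the products `R^ι` makes the comparison map `R^ι ⊗ M → M^ι` bijective for every
`ι`. Surjectivity for `ι = M` writes the identity of `M` as a finite sum `m = ∑ₖ fₖ(m) • mₖ`, so
`M` is finitely generated. For a presentation `0 → K → Rⁿ → M → 0`, right exactness of
`R^ι ⊗ -` and a diagram chase carry surjectivity to `K`, so `M` is finitely presented.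
Preservation of finite limits makes `M` flat, and a flat finitely presented module is projective.
-/

open CategoryTheory CategoryTheory.MonoidalCategory Limits Function

universe u

namespace TensorProduct

variable (R : Type*) [CommRing R] (M : Type*) [AddCommGroup M] [Module R M] (ι : Type*)

noncomputable def piScalarLeftHom : (ι → R) ⊗[R] M →ₗ[R] (ι → M) :=
  piScalarRightHom R R M ι ∘ₗ (TensorProduct.comm R (ι → R) M).toLinearMap

@[simp]
lemma piScalarLeftHom_tmul (f : ι → R) (m : M) :
    piScalarLeftHom R M ι (f ⊗ₜ m) = fun i ↦ f i • m := by
  simp [piScalarLeftHom]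

variable {R M ι}

lemma piScalarLeftHom_comp_lTensor {N : Type*} [AddCommGroup N] [Module R N] (f : M →ₗ[R] N) :
    piScalarLeftHom R N ι ∘ₗ f.lTensor (ι → R) = f.compLeft ι ∘ₗ piScalarLeftHom R M ι := by
  ext g m i
  simp

lemma bijective_piScalarLeftHom_pi (σ : Type*) [Fintype σ] [DecidableEq σ] :
    Bijective (piScalarLeftHom R (σ → R) ι) := by
  have key :
      ⇑(piScalarLeftHom R (σ → R) ι) = Equiv.piComm _ ∘ piScalarRight R R (ι → R) σ := by
    ext x i j
    induction x using TensorProduct.induction_on with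
    | zero => rfl
    | tmul f g => simp [swap, mul_comm]
    | add x y hx hy => simp_all [swap]
  rw [key]
  exact (Equiv.piComm _).bijective.comp (LinearEquiv.bijective _)

lemma surjective_piScalarLeftHom_of_exact {K F N : Type*} [AddCommGroup K] [Module R K]
    [AddCommGroup F] [Module R F] [AddCommGroup N] [Module R N] {i : K →ₗ[R] F} {p : F →ₗ[R] N}
    (hi : Injective i) (hp : Surjective p) (hip : Exact i p)
    (hF : Surjective (piScalarLeftHom R F ι)) (hN : Injective (piScalarLeftHom R N ι)) :
    Surjective (piScalarLeftHom R K ι) := by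
  intro y
  obtain ⟨t, ht⟩ := hF (i.compLeft ι y)
  have hpt : p.lTensor (ι → R) t = 0 := hN <| by
    rw [← LinearMap.comp_apply, piScalarLeftHom_comp_lTensor, LinearMap.comp_apply, ht,
      map_zero]
    ext k
    exact hip.apply_apply_eq_zero (y k)
  obtain ⟨s, rfl⟩ := (lTensor_exact (ι → R) hip hp t).mp hpt
  refine ⟨s, funext fun k ↦ hi ?_⟩
  rw [← LinearMap.comp_apply, piScalarLeftHom_comp_lTensor] at ht
  exact congr_fun ht k

end TensorProduct

open TensorProduct

lemma Module.Finite.of_surjective_piScalarLeftHom {R M : Type*} [CommRing R] [AddCommGroup M]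
    [Module R M] (h : Surjective (piScalarLeftHom R M M)) : Module.Finite R M := by
  classical
  obtain ⟨t, ht⟩ := h id
  obtain ⟨S, rfl⟩ := TensorProduct.exists_finset t
  refine ⟨⟨S.image Prod.snd, eq_top_iff.mpr fun m _ ↦ ?_⟩⟩
  have hm : m = ∑ p ∈ S, p.1 m • p.2 := by simpa using (congr_fun ht m).symm
  rw [hm]
  exact Submodule.sum_mem _ fun p hp ↦
    Submodule.smul_mem _ _ (Submodule.subset_span (Finset.mem_image_of_mem _ hp))

lemma ModuleCat.bijective_pi_of_isLimit_fanMk {R : Type*} [Ring R] {ι : Type u}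
    {Z : ι → ModuleCat.{u} R} {P : ModuleCat.{u} R} {g : ∀ i, P ⟶ Z i}
    (hc : IsLimit (Fan.mk P g)) :
    Bijective (LinearMap.pi fun i ↦ (g i).hom) := by
  let e := hc.conePointUniqueUpToIso (productConeIsLimit Z)
  have he : LinearMap.pi (fun i ↦ (g i).hom) = e.hom.hom := by
    ext x i
    exact congr(($(hc.conePointUniqueUpToIso_hom_comp (productConeIsLimit Z) ⟨i⟩)).hom x).symm
  rw [he]
  exact e.toLinearEquiv.bijective

section

variable {R : Type u} [CommRing R] {M : Type u} [AddCommGroup M] [Module R M]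

lemma Module.FinitePresentation.of_bijective_piScalarLeftHom
    (h : ∀ ι : Type u, Bijective (piScalarLeftHom R M ι)) : Module.FinitePresentation R M := by
  have : Module.Finite R M := .of_surjective_piScalarLeftHom (h M).surjective
  obtain ⟨n, p, hp⟩ := Module.Finite.exists_fin' R M
  have : Module.Finite R (LinearMap.ker p) := .of_surjective_piScalarLeftHom <|
    surjective_piScalarLeftHom_of_exact (LinearMap.ker p).injective_subtype hp
      p.exact_subtype_ker_map (bijective_piScalarLeftHom_pi _).surjective (h _).injective
  exact Module.finitePresentation_of_free_of_surjective p hp (Module.Finite.iff_fg.mp this)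

lemma bijective_piScalarLeftHom_of_preservesLimitsOfShape (ι : Type u)
    [PreservesLimitsOfShape (Discrete ι) (tensorRight (ModuleCat.of R M))] :
    Bijective (piScalarLeftHom R M ι) := by
  have hc : IsLimit (Fan.mk _ fun i : ι ↦ (tensorRight (ModuleCat.of R M)).map
      (ModuleCat.ofHom (LinearMap.proj i : (ι → R) →ₗ[R] R))) :=
    isLimitFanMkObjOfIsLimit _ _ _ (ModuleCat.productConeIsLimit fun _ ↦ ModuleCat.of R R)
  let lid : (ι → R ⊗[R] M) ≃ₗ[R] (ι → M) := .piCongrRight fun _ ↦ TensorProduct.lid R M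
  have hlid : piScalarLeftHom R M ι =
      lid.toLinearMap ∘ₗ LinearMap.pi fun i ↦ (LinearMap.proj i).rTensor M := by
    ext f m i
    simp [lid]
  rw [hlid]
  exact lid.bijective.comp (ModuleCat.bijective_pi_of_isLimit_fanMk hc)

end

/-- If the tensor product functor `− ⊗_R M` on the category of `R`-modules preserves all
small limits, then `M` is a finitely generated projective `R`-module. -/
theorem stmt_8 (R : Type u) [CommRing R] (M : Type u) [AddCommGroup M] [Module R M]
    (h : Limits.PreservesLimitsOfSize.{u, u} (tensorRight (ModuleCat.of R M))) :
    Module.Finite R M ∧ Module.Projective R M := by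
  have : Module.Flat R M :=
    (Module.Flat.iff_preservesFiniteLimits_tensorRight (ModuleCat.of R M)).mpr inferInstance
  have : Module.FinitePresentation R M :=
    .of_bijective_piScalarLeftHom fun ι ↦ bijective_piScalarLeftHom_of_preservesLimitsOfShape ι
  exact ⟨inferInstance, Module.Flat.projective_of_finitePresentation⟩
end

section
/- Let C be a category with finite limits. If f : X ⇄ Y : g is a homotopy equivalence of cosimplicial objects in C (i.e., there exist simplicial homotopies k from id_X to g∘f and l from id_Y to f∘g), then the induced map on limits lim_Δ X → lim_Δ Y is an isomorphism. -/
/-!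
Every leg of a cone over a cosimplicial object factors through the leg at `⦋1⦌`, which in turn
factors through the leg at `⦋0⦌` along either vertex `⦋0⦌ ⟶ ⦋1⦌`. Going through vertex `i`,
naturality of a homotopy `H` from `h₀` to `h₁` shows that the leg at `⦋1⦌` followed by `hᵢ`
equals that leg followed by `H ⦋1⦌ (𝟙 ⦋1⦌)`, for both `i`. So homotopic maps induce the same
map on limits, and a homotopy equivalence induces mutually inverse maps.
-/

open CategoryTheory CategoryTheory.Limits

/-- A (right) simplicial homotopy between two maps `h0 h1 : X ⟶ Y` of cosimplicial
objects in a category `C`.  This is exactly the data of a map `h : X ⟶ Y ⊗ Δ¹`, where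
`(Y ⊗ Δ¹)_n = ∏_{(Δ¹)_n} Y_n` and `(Δ¹)_n = Hom_Δ([n], [1])`, whose two restrictions
along the inclusions `Δ⁰ → Δ¹` (i.e. the projections at the two constant maps `[n] → [1]`)
are `h0` and `h1`: unravelling that definition componentwise gives precisely the fields
below, avoiding any existence assumption on products in `C`. -/
structure CosimplicialHomotopy {C : Type*} [Category C] {X Y : CosimplicialObject C}
    (h0 h1 : X ⟶ Y) where
  H : ∀ (n : SimplexCategory), (n ⟶ SimplexCategory.mk 1) → (X.obj n ⟶ Y.obj n)
  naturality : ∀ {n m : SimplexCategory} (θ : n ⟶ m) (g : m ⟶ SimplexCategory.mk 1),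
      X.map θ ≫ H m g = H n (θ ≫ g) ≫ Y.map θ
  restriction_zero : ∀ n, H n (SimplexCategory.const n (SimplexCategory.mk 1) 0) = h0.app n
  restriction_one : ∀ n, H n (SimplexCategory.const n (SimplexCategory.mk 1) 1) = h1.app n

open Simplicial

section

variable {J C : Type*} [Category J] [Category C]

theorem limMap_id (F : J ⥤ C) [HasLimit F] : limMap (𝟙 F) = 𝟙 (limit F) :=
  limit.hom_ext fun j => by simp

theorem limMap_comp_limMap {F G H : J ⥤ C} [HasLimit F] [HasLimit G] [HasLimit H]
    (α : F ⟶ G) (β : G ⟶ H) : limMap α ≫ limMap β = limMap (α ≫ β) :=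
  limit.hom_ext fun j => by simp

end

namespace CosimplicialHomotopy

variable {C : Type*} [Category C] {X Y : CosimplicialObject C} {h₀ h₁ : X ⟶ Y}
  (Hh : CosimplicialHomotopy h₀ h₁)
include Hh

theorem cone_π_comp_H (s : Cone X) {n m : SimplexCategory} (θ : n ⟶ m) (g : m ⟶ ⦋1⦌) :
    s.π.app m ≫ Hh.H m g = s.π.app n ≫ Hh.H n (θ ≫ g) ≫ Y.map θ := by
  rw [← Hh.naturality, ← s.w θ, Category.assoc]

theorem cone_π_comp_app_eq_of_restriction {h : X ⟶ Y} (i : Fin 2)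
    (hi : ∀ n, Hh.H n (SimplexCategory.const n ⦋1⦌ i) = h.app n) (s : Cone X)
    (j : SimplexCategory) :
    s.π.app j ≫ h.app j =
      s.π.app ⦋1⦌ ≫ Hh.H ⦋1⦌ (𝟙 _) ≫ Y.map (SimplexCategory.const ⦋1⦌ j 0) := by
  set θ := SimplexCategory.const ⦋1⦌ j 0
  set ι := SimplexCategory.const ⦋0⦌ ⦋1⦌ i
  have at_one : s.π.app ⦋1⦌ ≫ h.app ⦋1⦌ = s.π.app ⦋1⦌ ≫ Hh.H ⦋1⦌ (𝟙 _) := by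
    rw [Hh.cone_π_comp_H s ι, Category.comp_id, hi, ← s.w ι, Category.assoc,
      h.naturality]
  rw [← s.w θ, Category.assoc, h.naturality, ← Category.assoc, at_one, Category.assoc]

theorem cone_π_comp_app_eq (s : Cone X) (j : SimplexCategory) :
    s.π.app j ≫ h₀.app j = s.π.app j ≫ h₁.app j := by
  rw [Hh.cone_π_comp_app_eq_of_restriction 0 Hh.restriction_zero,
    Hh.cone_π_comp_app_eq_of_restriction 1 Hh.restriction_one]

theorem limMap_eq [HasLimit X] [HasLimit Y] : limMap h₀ = limMap h₁ :=
  limit.hom_ext fun j => (limMap_π h₀ j).trans <|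
    (Hh.cone_π_comp_app_eq (limit.cone X) j).trans (limMap_π h₁ j).symm

end CosimplicialHomotopy

theorem stmt_15_general {C : Type*} [Category C]
    [HasLimitsOfShape SimplexCategory C]
    (X Y : CosimplicialObject C) (f : X ⟶ Y) (g : Y ⟶ X)
    (k : CosimplicialHomotopy (𝟙 X) (f ≫ g))
    (l : CosimplicialHomotopy (𝟙 Y) (g ≫ f)) :
    IsIso (@limMap _ _ _ _ X Y (HasLimitsOfShape.has_limit (J := SimplexCategory) X)
      (HasLimitsOfShape.has_limit (J := SimplexCategory) Y) f) := by
  have := HasLimitsOfShape.has_limit (J := SimplexCategory) X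
  have := HasLimitsOfShape.has_limit (J := SimplexCategory) Y
  exact ⟨limMap g, (limMap_comp_limMap f g).trans (k.limMap_eq.symm.trans (limMap_id X)),
    (limMap_comp_limMap g f).trans (l.limMap_eq.symm.trans (limMap_id Y))⟩

/-- Let `C` be a category with finite limits (in which limits of cosimplicial objects
exist).  If `f : X ⇄ Y : g` is a homotopy equivalence of cosimplicial objects in `C`
(there are simplicial homotopies from `id_X` to `g ∘ f` and from `id_Y` to `f ∘ g`),
then the induced map on limits `lim_Δ X ⟶ lim_Δ Y` is an isomorphism. -/
theorem stmt_15 {C : Type*} [Category C] [HasFiniteLimits C]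
    [HasLimitsOfShape SimplexCategory C]
    (X Y : CosimplicialObject C) (f : X ⟶ Y) (g : Y ⟶ X)
    (k : CosimplicialHomotopy (𝟙 X) (f ≫ g))
    (l : CosimplicialHomotopy (𝟙 Y) (g ≫ f)) :
    IsIso (@limMap _ _ _ _ X Y (HasLimitsOfShape.has_limit (J := SimplexCategory) X)
      (HasLimitsOfShape.has_limit (J := SimplexCategory) Y) f) :=
  stmt_15_general X Y f g k l
end
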